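/- Let R be a finite local ring. Then the complement of the unitary Cayley graph G_R is always Ramanujan: its eigenvalues are m − 1 with multiplicity |R|/m and −1 with multiplicity (|R|/m)(m − 1), where m is the order of the maximal ideal. -/

import Mathlib

open Polynomial

open Polynomial

/-- The unitary Cayley graph of a finite commutative ring `R`. -/
def unitaryCayley (R : Type*) [CommRing R] [Fintype R] [DecidableEq R] : SimpleGraph R where
  Adj x y := x ≠ y ∧ IsUnit (x - y)
  symm := ⟨by
    intro x y h
    exact ⟨h.1.symm, by simpa using h.2.neg⟩⟩
  loopless := ⟨fun x h => h.1 rfl⟩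

instance unitaryCayley.instDecidableRel (R : Type*) [CommRing R] [Fintype R] [DecidableEq R] :
    DecidableRel (unitaryCayley R).Adj := fun a b =>
  decidable_of_iff (a ≠ b ∧ ∃ c, (a - b) * c = 1)
    (and_congr Iff.rfl (isUnit_iff_exists_inv (a := a - b)).symm)

/-- An `r`-regular graph is Ramanujan if every adjacency eigenvalue other than `±r`
has absolute value at most `2 * sqrt (r - 1)`. -/
def IsRamanujan {V : Type*} [Fintype V] [DecidableEq V] (G : SimpleGraph V)
    [DecidableRel G.Adj] (r : ℕ) : Prop :=
  ∀ μ ∈ (SimpleGraph.adjMatrix ℝ G).charpoly.roots,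
    |μ| ≠ (r : ℝ) → |μ| ≤ 2 * Real.sqrt ((r : ℝ) - 1)

/-- The energy of a graph: the sum of absolute values of its adjacency eigenvalues. -/
noncomputable def graphEnergy {V : Type*} [Fintype V] [DecidableEq V] (G : SimpleGraph V)
    [DecidableRel G.Adj] : ℝ :=
  ((SimpleGraph.adjMatrix ℝ G).charpoly.roots.map (fun μ => |μ|)).sum

/-!
In a local ring `x - y` is a unit exactly when `x` and `y` lie in different cosets of the maximal
ideal `𝔪`, so `G_R` is the pullback of the complete graph on `R ⧸ 𝔪` and its complement joins
distinct elements of a common coset. With `P` the incidence matrix between elements and cosets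
(`P = (1 : Matrix _ _ _).submatrix f id` for the quotient map `f`), the adjacency matrix of the
complement is `P Pᵀ - 1`, while `Pᵀ P = m • 1`. Since `P Pᵀ` and `Pᵀ P` have the same
characteristic polynomial up to a power of `X`, the spectrum is `m - 1` once per coset and `-1`
otherwise. The eigenvalue `-1` occurs only when `m ≥ 2`, and then `|-1| ≤ 2 √(r - 1)` unless
`r = m - 1 = 1`, so the graph is Ramanujan.
-/

open Matrix Finset

theorem Matrix.one_submatrix_id_mul_one_submatrix {V W α : Type*} [Fintype V] [DecidableEq W]
    [CommRing α] (f : V → W) :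
    (1 : Matrix W W α).submatrix id f * (1 : Matrix W W α).submatrix f id =
      diagonal fun w => (#{v | f v = w} : α) := by
  ext w w'
  simp only [mul_apply, submatrix_apply, id, one_apply, ite_mul, one_mul, zero_mul, ← ite_and,
    sum_boole, diagonal_apply]
  split_ifs with h
  · subst h; simp [eq_comm]
  · rw [filter_eq_empty_iff.mpr, card_empty, Nat.cast_zero]
    rintro v - ⟨rfl, rfl⟩
    exact h rfl

namespace SimpleGraph

variable {V W α : Type*} [DecidableEq V] [Fintype W] [DecidableEq W] [CommRing α]

theorem adjMatrix_compl_comap_top_add_one (f : V → W) :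
    ((⊤ : SimpleGraph W).comap f)ᶜ.adjMatrix α + 1 =
      (1 : Matrix W W α).submatrix f id * (1 : Matrix W W α).submatrix id f := by
  ext x y
  by_cases hxy : x = y
  · subst hxy; simp [one_apply, mul_apply]
  · by_cases hf : f x = f y <;> simp [one_apply, mul_apply, hxy, hf]

theorem charpoly_adjMatrix_compl_comap_top [Fintype V] (f : V → W) {m : ℕ} (hm : 0 < m)
    (hf : ∀ w, #{v | f v = w} = m) :
    (((⊤ : SimpleGraph W).comap f)ᶜ.adjMatrix α).charpoly =
      (X - C ((m : α) - 1)) ^ Fintype.card W * (X + C 1) ^ (Fintype.card W * (m - 1)) := by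
  have hcard : Fintype.card V = Fintype.card W * m := by
    rw [← card_univ, card_eq_sum_card_fiberwise (fun v _ => mem_univ (f v))]
    simp [hf]
  have hle : Fintype.card W ≤ Fintype.card V := hcard ▸ Nat.le_mul_of_pos_right _ hm
  rw [eq_sub_of_add_eq (adjMatrix_compl_comap_top_add_one (α := α) f),
    ← map_one (scalar V : α →+* Matrix V V α), charpoly_sub_scalar,
    charpoly_mul_comm_of_le _ _ hle, one_submatrix_id_mul_one_submatrix, charpoly_diagonal]
  simp only [hf, prod_const, card_univ, mul_comp, pow_comp, X_comp, sub_comp, C_comp, map_sub]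
  rw [hcard, ← Nat.mul_sub_one, mul_comm, sub_sub_eq_add_sub, add_sub_right_comm]

end SimpleGraph

open SimpleGraph

theorem isRamanujan_of_charpoly_eq {V : Type*} [Fintype V] [DecidableEq V] {G : SimpleGraph V}
    [DecidableRel G.Adj] {r k : ℕ}
    (h : (G.adjMatrix ℝ).charpoly = (X - C (r : ℝ)) ^ k * (X + C 1) ^ (k * r)) :
    IsRamanujan G r := by
  intro μ hμ hne
  rw [mem_roots (charpoly_monic _).ne_zero, IsRoot, h] at hμ
  simp only [eval_mul, eval_pow, eval_sub, eval_add, eval_X, eval_C, mul_eq_zero,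
    pow_eq_zero_iff', sub_eq_zero, add_eq_zero_iff_eq_neg, mul_ne_zero_iff] at hμ
  rcases hμ with ⟨rfl, -⟩ | ⟨rfl, -, hr⟩
  · exact absurd (abs_of_nonneg r.cast_nonneg) hne
  · have hr2 : (2 : ℝ) ≤ r := by
      rw [abs_neg, abs_one] at hne
      have hr1 : r ≠ 1 := by rintro rfl; simp at hne
      exact_mod_cast (by omega : 2 ≤ r)
    have hsqrt : 1 ≤ √((r : ℝ) - 1) := Real.one_le_sqrt.mpr (by linarith)
    rw [abs_neg, abs_one]
    linarith

theorem Ideal.Quotient.card_filter_mk_eq {R : Type*} [CommRing R] [Fintype R] (I : Ideal R)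
    [DecidableEq (R ⧸ I)] (q : R ⧸ I) : #{x | Ideal.Quotient.mk I x = q} = Nat.card I := by
  obtain ⟨a, rfl⟩ := Ideal.Quotient.mk_surjective q
  rw [← Fintype.card_subtype, ← Nat.card_eq_fintype_card]
  exact Nat.card_congr ((Equiv.subRight a).subtypeEquiv fun x => Ideal.Quotient.eq)

namespace IsLocalRing

variable (R : Type*) [CommRing R] [IsLocalRing R] [Fintype R] [DecidableEq R]

theorem unitaryCayley_eq_comap_top :
    unitaryCayley R = (⊤ : SimpleGraph (R ⧸ maximalIdeal R)).comap (Ideal.Quotient.mk _) := by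
  ext x y
  simp only [unitaryCayley, ne_eq, comap_adj, top_adj, Ideal.Quotient.eq, mem_maximalIdeal,
    mem_nonunits_iff, not_not, and_iff_right_iff_imp]
  rintro hu rfl
  simp at hu

theorem charpoly_adjMatrix_compl_unitaryCayley (α : Type*) [CommRing α]
    [Fintype (R ⧸ maximalIdeal R)] :
    ((unitaryCayley R)ᶜ.adjMatrix α).charpoly =
      (X - C ((Nat.card (maximalIdeal R) : α) - 1)) ^ Fintype.card (R ⧸ maximalIdeal R) *
        (X + C 1) ^ (Fintype.card (R ⧸ maximalIdeal R) * (Nat.card (maximalIdeal R) - 1)) := by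
  classical
  rw [← charpoly_adjMatrix_compl_comap_top (Ideal.Quotient.mk _) Nat.card_pos
    (Ideal.Quotient.card_filter_mk_eq _)]
  -- `rw` cannot rewrite the graph under its `DecidableRel` instance; `simp` can, entrywise.
  congr 1
  ext x y
  simp only [adjMatrix_apply, unitaryCayley_eq_comap_top]

end IsLocalRing

open IsLocalRing

/-- Let `R` be a finite local ring with maximal ideal `M` of order `m`. Then the complement
of the unitary Cayley graph `G_R` is always Ramanujan: its eigenvalues are `m - 1` with
multiplicity `|R|/m` and `-1` with multiplicity `(|R|/m)(m - 1)`. -/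
theorem stmt_11 (R : Type*) [CommRing R] [IsLocalRing R] [Fintype R] [DecidableEq R]
    (M : Ideal R) (hM : M.IsMaximal) (m : ℕ) (hm : m = Nat.card M) :
    IsRamanujan (unitaryCayley R)ᶜ (m - 1) ∧
      (SimpleGraph.adjMatrix ℝ (unitaryCayley R)ᶜ).charpoly =
        (X - C ((m : ℝ) - 1)) ^ (Fintype.card R / m) *
          (X + C (1 : ℝ)) ^ ((Fintype.card R / m) * (m - 1)) := by
  obtain rfl := eq_maximalIdeal hM
  have := Fintype.ofFinite (R ⧸ maximalIdeal R)
  have hm0 : 0 < m := hm ▸ Nat.card_pos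
  have hquot : Fintype.card R / m = Fintype.card (R ⧸ maximalIdeal R) := by
    rw [← Nat.card_eq_fintype_card, Submodule.card_eq_card_quotient_mul_card (maximalIdeal R),
      ← hm, Nat.card_eq_fintype_card, Nat.mul_div_cancel_left _ hm0]
  have hcp := charpoly_adjMatrix_compl_unitaryCayley R ℝ
  rw [← hm, ← hquot] at hcp
  exact ⟨isRamanujan_of_charpoly_eq (by rw [hcp, Nat.cast_pred hm0]), hcp⟩
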